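/- arXiv:0809.4964 — 2 statements merged into one kernel-verified Lean document; each statement's English description precedes it below -/
import Mathlib

section
/- For any quasi-uniform space (X, 𝒰), the stability space (S_D(X), 𝒰_D) is bicomplete, i.e., the uniformity (𝒰_D)^s is complete: every (𝒰_D)^s-Cauchy filter on S_D(X) converges in the topology τ((𝒰_D)^s). -/
open Filter Set

variable {X Y : Type*}

/-- Image of a set under a relation: `U(A) = {y : ∃ x ∈ A, (x,y) ∈ U}`. -/
def relImg (U : Set (X × X)) (A : Set X) : Set X := {y | ∃ x ∈ A, (x, y) ∈ U}

/-- Inverse image: `U⁻¹(A) = {y : ∃ x ∈ A, (y,x) ∈ U}`. -/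
def relPre (U : Set (X × X)) (A : Set X) : Set X := {y | ∃ x ∈ A, (y, x) ∈ U}

/-- A quasi-uniformity: a filter of reflexive relations, each containing
a relational square of a member. -/
structure IsQuasiUniformity (𝒰 : Filter (X × X)) : Prop where
  refl : ∀ U ∈ 𝒰, (SetRel.id : Set (X × X)) ⊆ U
  comp : ∀ U ∈ 𝒰, ∃ V ∈ 𝒰, SetRel.comp V V ⊆ U

/-- A filter is stable if `⋂_{F ∈ ℱ} U(F) ∈ ℱ` for all `U ∈ 𝒰`. -/
def IsStable (𝒰 : Filter (X × X)) (ℱ : Filter X) : Prop :=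
  ∀ U ∈ 𝒰, (⋂ F ∈ ℱ.sets, relImg U F) ∈ ℱ

/-- `U_ℱ = ⋂_{F ∈ ℱ} (U⁻¹(F) ∩ U(F))`. -/
def bigU (U : Set (X × X)) (ℱ : Filter X) : Set X :=
  ⋂ F ∈ ℱ.sets, (relPre U F ∩ relImg U F)

/-- A filter is doubly stable if `U_ℱ ∈ ℱ` for all `U ∈ 𝒰`. -/
def IsDoublyStable (𝒰 : Filter (X × X)) (ℱ : Filter X) : Prop :=
  ∀ U ∈ 𝒰, bigU U ℱ ∈ ℱ

/-- The 2-envelope of a filter. -/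
def envelope (𝒰 : Filter (X × X)) (ℱ : Filter X) : Filter X :=
  Filter.generate {S | ∃ U ∈ 𝒰, ∃ F ∈ ℱ, S = relPre U F ∩ relImg U F}

/-- The filter `ℱ_𝒰` generated by `{U_ℱ : U ∈ 𝒰}`. -/
def filterU (𝒰 : Filter (X × X)) (ℱ : Filter X) : Filter X :=
  Filter.generate {S | ∃ U ∈ 𝒰, S = bigU U ℱ}

/-- `τ(𝒰)`-cluster points of a filter. -/
def fwdCluster (𝒰 : Filter (X × X)) (ℱ : Filter X) : Set X :=
  {x | ∀ F ∈ ℱ, ∀ U ∈ 𝒰, ∃ y ∈ F, (x, y) ∈ U}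

/-- `τ(𝒰⁻¹)`-cluster points of a filter. -/
def bwdCluster (𝒰 : Filter (X × X)) (ℱ : Filter X) : Set X :=
  {x | ∀ F ∈ ℱ, ∀ U ∈ 𝒰, ∃ y ∈ F, (y, x) ∈ U}

/-- The set of double cluster points of a filter. -/
def doubleCluster (𝒰 : Filter (X × X)) (ℱ : Filter X) : Set X :=
  fwdCluster 𝒰 ℱ ∩ bwdCluster 𝒰 ℱ

/-- The basic entourage `U_D = U_+ ∩ U_-` of the stability quasi-uniformity. -/
def UD (U : Set (X × X)) : Set (Filter X × Filter X) :=
  {p | (⋂ F ∈ p.1.sets, relImg U F) ∈ p.2 ∧ (⋂ G ∈ p.2.sets, relPre U G) ∈ p.1}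

/-! The limit of a `(𝒰_D)^s`-Cauchy filter `Φ` is the filter on `X` whose members contain
`U_𝒢` for some `U ∈ 𝒰` and `Φ`-almost all `𝒢`. The composition axiom `V ∘ V ⊆ U` turns
mutual `V_D`-closeness of `𝒢, 𝒢'` into `V_𝒢' ⊆ U_𝒢`; since a Cauchy set for `V` and any
member of `Φ` meet, this makes the limit doubly stable and `U_D`-close to almost all `𝒢`. -/

lemma relImg_mono_left {U V : Set (X × X)} (h : U ⊆ V) (A : Set X) :
    relImg U A ⊆ relImg V A := fun _ ⟨x, hx, hxy⟩ => ⟨x, hx, h hxy⟩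

lemma relPre_mono_left {U V : Set (X × X)} (h : U ⊆ V) (A : Set X) :
    relPre U A ⊆ relPre V A := fun _ ⟨x, hx, hxy⟩ => ⟨x, hx, h hxy⟩

lemma relImg_mono_right (U : Set (X × X)) {A B : Set X} (h : A ⊆ B) :
    relImg U A ⊆ relImg U B := fun _ ⟨x, hx, hxy⟩ => ⟨x, h hx, hxy⟩

lemma relPre_mono_right (U : Set (X × X)) {A B : Set X} (h : A ⊆ B) :
    relPre U A ⊆ relPre U B := fun _ ⟨x, hx, hxy⟩ => ⟨x, h hx, hxy⟩

lemma relImg_relImg_subset (V W : Set (X × X)) (A : Set X) :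
    relImg W (relImg V A) ⊆ relImg (SetRel.comp V W) A :=
  fun _ ⟨_, ⟨a, ha, hay⟩, hyz⟩ => ⟨a, ha, SetRel.prodMk_mem_comp hay hyz⟩

lemma relPre_relPre_subset (V W : Set (X × X)) (A : Set X) :
    relPre V (relPre W A) ⊆ relPre (SetRel.comp V W) A :=
  fun _ ⟨_, ⟨a, ha, hya⟩, hxy⟩ => ⟨a, ha, SetRel.prodMk_mem_comp hxy hya⟩

lemma mem_bigU {U : Set (X × X)} {ℱ : Filter X} {x : X} :
    x ∈ bigU U ℱ ↔ ∀ F ∈ ℱ, x ∈ relPre U F ∧ x ∈ relImg U F := by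
  simp only [bigU, mem_iInter, mem_inter_iff, Filter.mem_sets]

lemma bigU_subset_relPre_inter_relImg (U : Set (X × X)) {ℱ : Filter X} {F : Set X}
    (hF : F ∈ ℱ) : bigU U ℱ ⊆ relPre U F ∩ relImg U F :=
  biInter_subset_of_mem (t := fun F => relPre U F ∩ relImg U F) hF

lemma bigU_subset_iInter_relImg (U : Set (X × X)) (ℱ : Filter X) :
    bigU U ℱ ⊆ ⋂ F ∈ ℱ.sets, relImg U F :=
  subset_iInter₂ fun _ hF => (bigU_subset_relPre_inter_relImg U hF).trans inter_subset_right

lemma bigU_subset_iInter_relPre (U : Set (X × X)) (ℱ : Filter X) :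
    bigU U ℱ ⊆ ⋂ F ∈ ℱ.sets, relPre U F :=
  subset_iInter₂ fun _ hF => (bigU_subset_relPre_inter_relImg U hF).trans inter_subset_left

lemma bigU_mono_left {U V : Set (X × X)} (h : U ⊆ V) (ℱ : Filter X) :
    bigU U ℱ ⊆ bigU V ℱ := fun _ hx => mem_bigU.2 fun F hF =>
  ⟨relPre_mono_left h F (mem_bigU.1 hx F hF).1, relImg_mono_left h F (mem_bigU.1 hx F hF).2⟩

lemma bigU_subset_bigU_of_mem_UD {U V : Set (X × X)} (hVV : SetRel.comp V V ⊆ U)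
    {𝒢 𝒢' : Filter X} (h₁ : (𝒢, 𝒢') ∈ UD V) (h₂ : (𝒢', 𝒢) ∈ UD V) :
    bigU V 𝒢' ⊆ bigU U 𝒢 := by
  intro x hx
  refine mem_bigU.2 fun G hG => ⟨?_, ?_⟩
  · have hxB := (bigU_subset_relPre_inter_relImg V h₂.2 hx).1
    exact relPre_mono_left hVV G <| relPre_relPre_subset V V G <|
      relPre_mono_right V (biInter_subset_of_mem (t := fun F => relPre V F) hG) hxB
  · have hxA := (bigU_subset_relPre_inter_relImg V h₁.1 hx).2
    exact relImg_mono_left hVV G <| relImg_relImg_subset V V G <|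
      relImg_mono_right V (biInter_subset_of_mem (t := fun F => relImg V F) hG) hxA

abbrev DoublyStable (𝒰 : Filter (X × X)) : Type _ := {ℱ : Filter X // IsDoublyStable 𝒰 ℱ}

def cauchyLimit (𝒰 : Filter (X × X)) (Φ : Filter (DoublyStable 𝒰)) : Filter X where
  sets := {A | ∃ U ∈ 𝒰, ∀ᶠ 𝒢 in Φ, bigU U 𝒢.1 ⊆ A}
  univ_sets := ⟨univ, univ_mem, Eventually.of_forall fun _ => subset_univ _⟩
  sets_of_superset := by
    rintro A B ⟨U, hU, hA⟩ hAB
    exact ⟨U, hU, hA.mono fun 𝒢 h => h.trans hAB⟩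
  inter_sets := by
    rintro A B ⟨U, hU, hA⟩ ⟨V, hV, hB⟩
    refine ⟨U ∩ V, inter_mem hU hV, ?_⟩
    filter_upwards [hA, hB] with 𝒢 h₁ h₂
    exact subset_inter ((bigU_mono_left inter_subset_left _).trans h₁)
      ((bigU_mono_left inter_subset_right _).trans h₂)

section CauchyLimit

variable {𝒰 : Filter (X × X)} {Φ : Filter (DoublyStable 𝒰)} {U V : Set (X × X)}
  {S : Set (DoublyStable 𝒰)}

lemma bigU_subset_bigU_cauchyLimit [Φ.NeBot] (hVV : SetRel.comp V V ⊆ U) (hS : S ∈ Φ)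
    (hSV : ∀ p ∈ S, ∀ q ∈ S, (p.1, q.1) ∈ UD V ∧ (q.1, p.1) ∈ UD V)
    {𝒢 : DoublyStable 𝒰} (h𝒢 : 𝒢 ∈ S) :
    bigU V 𝒢.1 ⊆ bigU U (cauchyLimit 𝒰 Φ) := by
  intro x hx
  refine mem_bigU.2 fun H ⟨W, hW, hWH⟩ => ?_
  obtain ⟨𝒢', h𝒢'S, h𝒢'H⟩ := Filter.nonempty_of_mem (inter_mem hS hWH)
  have hx' : x ∈ bigU U 𝒢'.1 :=
    bigU_subset_bigU_of_mem_UD hVV (hSV 𝒢' h𝒢'S 𝒢 h𝒢).1 (hSV 𝒢' h𝒢'S 𝒢 h𝒢).2 hx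
  have hxW := bigU_subset_relPre_inter_relImg U (𝒢'.2 W hW) hx'
  exact ⟨relPre_mono_right U h𝒢'H hxW.1, relImg_mono_right U h𝒢'H hxW.2⟩

lemma eventually_mem_UD_cauchyLimit [Φ.NeBot] (hV : V ∈ 𝒰) (hVV : SetRel.comp V V ⊆ U)
    (hS : S ∈ Φ) (hSV : ∀ p ∈ S, ∀ q ∈ S, (p.1, q.1) ∈ UD V ∧ (q.1, p.1) ∈ UD V) :
    ∀ᶠ 𝒢 in Φ, (cauchyLimit 𝒰 Φ, 𝒢.1) ∈ UD U ∧ (𝒢.1, cauchyLimit 𝒰 Φ) ∈ UD U := by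
  filter_upwards [hS] with 𝒢 h𝒢
  have h𝒢V : bigU V 𝒢.1 ∈ 𝒢.1 := 𝒢.2 V hV
  have hlim := bigU_subset_bigU_cauchyLimit hVV hS hSV h𝒢
  have hnear : ∀ᶠ 𝒢' in Φ, bigU V 𝒢'.1 ⊆ bigU U 𝒢.1 := by
    filter_upwards [hS] with 𝒢' h𝒢'
    exact bigU_subset_bigU_of_mem_UD hVV (hSV 𝒢 h𝒢 𝒢' h𝒢').1 (hSV 𝒢 h𝒢 𝒢' h𝒢').2
  refine ⟨⟨?_, ?_⟩, ?_, ?_⟩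
  · exact mem_of_superset h𝒢V (hlim.trans (bigU_subset_iInter_relImg U _))
  · exact ⟨V, hV, hnear.mono fun _ h => h.trans (bigU_subset_iInter_relPre U _)⟩
  · exact ⟨V, hV, hnear.mono fun _ h => h.trans (bigU_subset_iInter_relImg U _)⟩
  · exact mem_of_superset h𝒢V (hlim.trans (bigU_subset_iInter_relPre U _))

lemma isDoublyStable_cauchyLimit [Φ.NeBot] (h𝒰 : IsQuasiUniformity 𝒰)
    (hΦ : ∀ V ∈ 𝒰, ∃ S ∈ Φ, ∀ p ∈ S, ∀ q ∈ S, (p.1, q.1) ∈ UD V ∧ (q.1, p.1) ∈ UD V) :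
    IsDoublyStable 𝒰 (cauchyLimit 𝒰 Φ) := by
  intro U hU
  obtain ⟨V, hV, hVV⟩ := h𝒰.comp U hU
  obtain ⟨S, hS, hSV⟩ := hΦ V hV
  exact ⟨V, hV, mem_of_superset hS fun _ => bigU_subset_bigU_cauchyLimit hVV hS hSV⟩

end CauchyLimit

theorem stmt18 (𝒰 : Filter (X × X)) (h𝒰 : IsQuasiUniformity 𝒰)
    (Φ : Filter {ℱ : Filter X // IsDoublyStable 𝒰 ℱ}) (hne : Φ.NeBot)
    (hcauchy : ∀ U ∈ 𝒰, ∃ S ∈ Φ, ∀ p ∈ S, ∀ q ∈ S,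
      ((p : {ℱ : Filter X // IsDoublyStable 𝒰 ℱ}).1, (q : _).1) ∈ UD U ∧
      ((q : {ℱ : Filter X // IsDoublyStable 𝒰 ℱ}).1, (p : _).1) ∈ UD U) :
    ∃ ℋ : {ℱ : Filter X // IsDoublyStable 𝒰 ℱ}, ∀ U ∈ 𝒰,
      {𝒢 : {ℱ : Filter X // IsDoublyStable 𝒰 ℱ} |
        (ℋ.1, 𝒢.1) ∈ UD U ∧ (𝒢.1, ℋ.1) ∈ UD U} ∈ Φ := by
  refine ⟨⟨cauchyLimit 𝒰 Φ, isDoublyStable_cauchyLimit h𝒰 hcauchy⟩, fun U hU => ?_⟩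
  obtain ⟨V, hV, hVV⟩ := h𝒰.comp U hU
  obtain ⟨S, hS, hSV⟩ := hcauchy V hV
  exact eventually_mem_UD_cauchyLimit hV hVV hS hSV
end

section
/- A quasi-uniform space (X, 𝒰) is precompact if and only if the stability space (S_D(X), 𝒰_D) is precompact. -/
open Filter Set

variable {X Y : Type*}

/-- A quasi-uniform space is precompact if each entourage admits a finite
collection of balls covering the space. -/
def IsPrecompact (𝒰 : Filter (X × X)) : Prop :=
  ∀ U ∈ 𝒰, ∃ F : Set X, F.Finite ∧ ∀ x : X, ∃ f ∈ F, (f, x) ∈ U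

/-!
If `K` is a finite `V`-net with `V ∘ V ⊆ U`, a doubly stable filter `ℱ` is `U_D`-close to the
principal filter of the points of `K` that are `V`-close to the `ℱ`-large set
`⋂_{G ∈ ℱ} V⁻¹(G)`; so the principal filters of subsets of `K` form a finite `U_D`-net.
Conversely, test a finite `W_D`-net `T` against the point filters `𝓟 {x}`: if
`(𝒢, 𝓟 {x}) ∈ W_D` then `𝒢` is proper and every point of `W_𝒢 ∈ 𝒢` is `W ∘ W`-close to `x`,
so one point from each `W_𝒢` gives a finite net of `X`.
-/

section Relations

variable {U V : Set (X × X)}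

lemma relImg_mono {A B : Set X} (h : A ⊆ B) : relImg U A ⊆ relImg U B :=
  fun _ ⟨x, hx, hxy⟩ => ⟨x, h hx, hxy⟩

lemma relPre_mono {A B : Set X} (h : A ⊆ B) : relPre U A ⊆ relPre U B :=
  fun _ ⟨x, hx, hyx⟩ => ⟨x, h hx, hyx⟩

lemma relImg_empty : relImg U (∅ : Set X) = ∅ :=
  eq_empty_iff_forall_notMem.2 fun _ ⟨_, hx, _⟩ => hx

lemma mem_relPre_relPre_singleton {p x : X} :
    p ∈ relPre V (relPre U {x}) ↔ (p, x) ∈ SetRel.comp V U := by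
  simp [relPre, and_comm]

lemma biInter_relImg_principal (E : Set X) : ⋂ F ∈ (𝓟 E).sets, relImg U F = relImg U E :=
  (biInter_subset_of_mem (mem_principal_self E)).antisymm
    (subset_iInter₂ fun _ hF => relImg_mono (mem_principal.1 hF))

lemma biInter_relPre_principal (E : Set X) : ⋂ F ∈ (𝓟 E).sets, relPre U F = relPre U E :=
  (biInter_subset_of_mem (mem_principal_self E)).antisymm
    (subset_iInter₂ fun _ hF => relPre_mono (mem_principal.1 hF))

lemma bigU_subset_relPre {ℱ : Filter X} {G : Set X} (hG : G ∈ ℱ) : bigU U ℱ ⊆ relPre U G :=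
  fun _ hp => (mem_iInter₂.1 hp G hG).1

lemma bigU_subset_biInter_relPre (ℱ : Filter X) : bigU U ℱ ⊆ ⋂ G ∈ ℱ.sets, relPre U G :=
  subset_iInter₂ fun _ hG => bigU_subset_relPre hG

end Relations

section StabilitySpace

variable {U : Set (X × X)} {𝒢 ℱ : Filter X}

lemma principal_mem_UD_iff {E : Set X} :
    (𝓟 E, ℱ) ∈ UD U ↔ relImg U E ∈ ℱ ∧ E ⊆ ⋂ G ∈ ℱ.sets, relPre U G := by
  simp only [UD, mem_ofPred_eq, biInter_relImg_principal, mem_principal]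

lemma mem_UD_principal_iff {E : Set X} :
    (𝒢, 𝓟 E) ∈ UD U ↔ E ⊆ ⋂ F ∈ 𝒢.sets, relImg U F ∧ relPre U E ∈ 𝒢 := by
  simp only [UD, mem_ofPred_eq, biInter_relPre_principal, mem_principal]

lemma neBot_of_mem_UD [ℱ.NeBot] (h : (𝒢, ℱ) ∈ UD U) : 𝒢.NeBot := by
  rw [neBot_iff, Ne, ← empty_mem_iff_bot]
  intro h𝒢
  have hempty : ⋂ F ∈ 𝒢.sets, relImg U F ⊆ ∅ :=
    relImg_empty (U := U) ▸ biInter_subset_of_mem h𝒢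
  exact ℱ.empty_notMem (mem_of_superset h.1 hempty)

lemma isDoublyStable_principal {𝒰 : Filter (X × X)} (h𝒰 : IsQuasiUniformity 𝒰) (E : Set X) :
    IsDoublyStable 𝒰 (𝓟 E) := fun U hU e he =>
  mem_iInter₂.2 fun _ hF =>
    have hee : (e, e) ∈ U := h𝒰.refl U hU rfl
    ⟨⟨e, hF he, hee⟩, ⟨e, hF he, hee⟩⟩

lemma exists_subset_principal_mem_UD {V : Set (X × X)} {K : Set X}
    (hVU : V ⊆ U) (hVV : SetRel.comp V V ⊆ U) (hK : ∀ x, ∃ k ∈ K, (k, x) ∈ V)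
    (hℱ : ⋂ G ∈ ℱ.sets, relPre V G ∈ ℱ) :
    ∃ E ⊆ K, (𝓟 E, ℱ) ∈ UD U := by
  set A := ⋂ G ∈ ℱ.sets, relPre V G
  refine ⟨{k ∈ K | ∃ a ∈ A, (k, a) ∈ V}, fun k hk => hk.1, principal_mem_UD_iff.2 ⟨?_, ?_⟩⟩
  · refine mem_of_superset hℱ fun a ha => ?_
    obtain ⟨k, hkK, hka⟩ := hK a
    exact ⟨k, ⟨hkK, a, ha, hka⟩, hVU hka⟩
  · rintro k ⟨-, a, ha, hka⟩
    refine mem_iInter₂.2 fun G hG => ?_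
    obtain ⟨y, hyG, hay⟩ := mem_iInter₂.1 ha G hG
    exact ⟨y, hyG, hVV ⟨a, hka, hay⟩⟩

lemma comp_mem_of_mem_UD_principal_singleton {x p : X} (h : (𝒢, 𝓟 {x}) ∈ UD U)
    (hp : p ∈ bigU U 𝒢) : (p, x) ∈ SetRel.comp U U :=
  mem_relPre_relPre_singleton.1 (bigU_subset_relPre (mem_UD_principal_iff.1 h).2 hp)

end StabilitySpace

lemma exists_finite_net_of_finite_cover {ι : Type*} {T : Set ι} (hT : T.Finite)
    (s : ι → Set X) (U : Set (X × X))
    (h : ∀ x, ∃ i ∈ T, (s i).Nonempty ∧ ∀ p ∈ s i, (p, x) ∈ U) :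
    ∃ F : Set X, F.Finite ∧ ∀ x, ∃ f ∈ F, (f, x) ∈ U := by
  refine ⟨⋃ i ∈ T, ⋃ hi : (s i).Nonempty, {hi.some},
    hT.biUnion fun i _ => finite_iUnion fun _ => finite_singleton _, fun x => ?_⟩
  obtain ⟨i, hiT, hne, hU⟩ := h x
  exact ⟨hne.some, mem_biUnion hiT (mem_iUnion.2 ⟨hne, rfl⟩), hU _ hne.some_mem⟩

theorem stmt19 (𝒰 : Filter (X × X)) (h𝒰 : IsQuasiUniformity 𝒰) :
    IsPrecompact 𝒰 ↔
      ∀ U ∈ 𝒰, ∃ T : Set (Filter X), T.Finite ∧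
        (∀ 𝒢 ∈ T, IsDoublyStable 𝒰 𝒢) ∧
        ∀ ℱ : Filter X, IsDoublyStable 𝒰 ℱ → ∃ 𝒢 ∈ T, (𝒢, ℱ) ∈ UD U := by
  constructor
  · intro hpre U hU
    obtain ⟨V, hV, hVV⟩ := h𝒰.comp U hU
    have hVU : V ⊆ U := fun p hp => hVV ⟨p.1, h𝒰.refl V hV rfl, hp⟩
    obtain ⟨K, hKfin, hK⟩ := hpre V hV
    refine ⟨𝓟 '' 𝒫 K, hKfin.finite_subsets.image _,
      forall_mem_image.2 fun E _ => isDoublyStable_principal h𝒰 E, fun ℱ hℱ => ?_⟩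
    obtain ⟨E, hEK, hE⟩ := exists_subset_principal_mem_UD hVU hVV hK
      (mem_of_superset (hℱ V hV) (bigU_subset_biInter_relPre ℱ))
    exact ⟨𝓟 E, mem_image_of_mem _ hEK, hE⟩
  · intro h U hU
    obtain ⟨W, hW, hWW⟩ := h𝒰.comp U hU
    obtain ⟨T, hTfin, hTds, hTcov⟩ := h W hW
    refine exists_finite_net_of_finite_cover hTfin (bigU W) U fun x => ?_
    obtain ⟨𝒢, h𝒢T, hx⟩ := hTcov (𝓟 {x}) (isDoublyStable_principal h𝒰 {x})
    have := principal_neBot_iff.2 (singleton_nonempty x)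
    have : 𝒢.NeBot := neBot_of_mem_UD hx
    exact ⟨𝒢, h𝒢T, nonempty_of_mem (hTds 𝒢 h𝒢T W hW),
      fun p hp => hWW (comp_mem_of_mem_UD_principal_singleton hx hp)⟩
end
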